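/- Let 𝒟 ⊆ 𝒞 be subcategories of 𝓑 satisfying condition (RCP), ℋ := CoCone(𝒞,𝒞), and let ℋ/𝒞 be the heart of (𝒞,𝒞^⊥¹). If f̄ : Y → X is a monomorphism in the heart ℋ/𝒞 (X, Y ∈ ℋ) and X ∈ 𝒟^⊥¹, then Y ∈ 𝒟^⊥¹. -/

import Mathlib

open CategoryTheory Category Limits ZeroObject

universe v u

namespace CotorsionPaper

variable {B : Type u} [Category.{v} B] [Abelian B]

/-- `f, g` form a short exact sequence `0 → X → Y → Z → 0`. -/
def IsSES {X Y Z : B} (f : X ⟶ Y) (g : Y ⟶ Z) : Prop :=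
  ∃ w : f ≫ g = 0, (ShortComplex.mk f g w).ShortExact

/-- `Ext¹(X, Y) = 0`: every short exact sequence `0 → Y → E → X → 0` splits. -/
def Ext1Zero (X Y : B) : Prop :=
  ∀ ⦃E : B⦄ (i : Y ⟶ E) (p : E ⟶ X), IsSES i p → ∃ s : X ⟶ E, s ≫ p = 𝟙 X

/-- `Ext²(X, Y) = 0`, via dimension shifting: `Ext¹(K, Y) = 0` for any syzygy `K` of `X`. -/
def Ext2Zero (X Y : B) : Prop :=
  ∀ ⦃K P : B⦄ (i : K ⟶ P) (p : P ⟶ X), Projective P → IsSES i p → Ext1Zero K Y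

/-- A (strictly) full additive subcategory: closed under isomorphisms,
contains a zero object and is closed under finite direct sums. -/
structure AddSubcat (S : Set B) : Prop where
  zero_mem : (0 : B) ∈ S
  iso_closed : ∀ ⦃X Y : B⦄, (X ≅ Y) → X ∈ S → Y ∈ S
  sum_closed : ∀ ⦃X Y : B⦄, X ∈ S → Y ∈ S → (X ⊞ Y) ∈ S

/-- `S` is closed under direct summands (retracts). -/
def ClosedUnderSummands (S : Set B) : Prop :=
  ∀ ⦃X Y : B⦄ (r : X ⟶ Y) (s : Y ⟶ X), s ≫ r = 𝟙 Y → X ∈ S → Y ∈ S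

/-- `S` is rigid: `Ext¹(X, Y) = 0` for all `X, Y ∈ S`. -/
def Rigid (S : Set B) : Prop :=
  ∀ ⦃X⦄, X ∈ S → ∀ ⦃Y⦄, Y ∈ S → Ext1Zero X Y

/-- `S^⊥¹`. -/
def rightPerp (S : Set B) : Set B := {Y | ∀ ⦃X⦄, X ∈ S → Ext1Zero X Y}

/-- `^⊥¹S`. -/
def leftPerp (S : Set B) : Set B := {X | ∀ ⦃Y⦄, Y ∈ S → Ext1Zero X Y}

/-- `f : X ⟶ A` is a right `S`-approximation of `A`. -/
def IsRightApprox (S : Set B) {X A : B} (f : X ⟶ A) : Prop :=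
  X ∈ S ∧ ∀ ⦃X' : B⦄, X' ∈ S → ∀ g : X' ⟶ A, ∃ h : X' ⟶ X, h ≫ f = g

def ContravariantlyFinite (S : Set B) : Prop :=
  ∀ A : B, ∃ (X : B) (f : X ⟶ A), IsRightApprox S f

/-- `f : A ⟶ X` is a left `S`-approximation of `A`. -/
def IsLeftApprox (S : Set B) {A X : B} (f : A ⟶ X) : Prop :=
  X ∈ S ∧ ∀ ⦃X' : B⦄, X' ∈ S → ∀ g : A ⟶ X', ∃ h : X ⟶ X', f ≫ h = g

def CovariantlyFinite (S : Set B) : Prop :=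
  ∀ A : B, ∃ (X : B) (f : A ⟶ X), IsLeftApprox S f

/-- `(U, V)` is a cotorsion pair. -/
structure CotorsionPair (U V : Set B) : Prop where
  summands_left : ClosedUnderSummands U
  summands_right : ClosedUnderSummands V
  ext : ∀ ⦃X⦄, X ∈ U → ∀ ⦃Y⦄, Y ∈ V → Ext1Zero X Y
  resol : ∀ X : B, ∃ (VX UX : B) (i : VX ⟶ UX) (p : UX ⟶ X),
    VX ∈ V ∧ UX ∈ U ∧ IsSES i p
  coresol : ∀ X : B, ∃ (VX UX : B) (i : X ⟶ VX) (p : VX ⟶ UX),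
    VX ∈ V ∧ UX ∈ U ∧ IsSES i p

/-- `CoCone(S, T)`. -/
def CoCone (S T : Set B) : Set B :=
  {X | ∃ (B' B'' : B) (i : X ⟶ B') (p : B' ⟶ B''), B' ∈ S ∧ B'' ∈ T ∧ IsSES i p}

/-- `Cone(S, T)`. -/
def Cone (S T : Set B) : Set B :=
  {X | ∃ (B' B'' : B) (i : B' ⟶ B'') (p : B'' ⟶ X), B' ∈ S ∧ B'' ∈ T ∧ IsSES i p}

/-- The subcategory `𝒫` of projective objects. -/
def projSet : Set B := {P | Projective P}

/-- The subcategory `ℐ` of injective objects. -/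
def injSet : Set B := {I | Injective I}

/-- `Ω𝒞`, the (first) syzygy of `𝒞`. -/
def Syz (C : Set B) : Set B := CoCone projSet C

/-- Condition (RCP): `𝒫 ⊆ 𝒞`, `𝒞` rigid, contravariantly finite,
closed under direct summands (and a full additive subcategory). -/
structure RCP (C : Set B) : Prop where
  add : AddSubcat C
  proj_mem : ∀ ⦃P : B⦄, Projective P → P ∈ C
  rigid : Rigid C
  contra : ContravariantlyFinite C
  summands : ClosedUnderSummands C

/-- `f` factors through an object of `S`. -/
def FactorsThru (S : Set B) {X Y : B} (f : X ⟶ Y) : Prop :=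
  ∃ (Z : B) (g : X ⟶ Z) (h : Z ⟶ Y), Z ∈ S ∧ g ≫ h = f

/-- The ideal of morphisms of the full subcategory on `H` factoring through an object of `S`. -/
def idealRel (H S : Set B) : HomRel (ObjectProperty.FullSubcategory (show ObjectProperty B from H)) :=
  fun X Y f g => FactorsThru S (show X.obj ⟶ Y.obj from f.hom - g.hom)

/-- The ideal quotient `H/S`. -/
abbrev HeartCat (H S : Set B) := CategoryTheory.Quotient (idealRel H S)

/-- The quotient functor `H → H/S`. -/
abbrev heartQ (H S : Set B) : ObjectProperty.FullSubcategory (show ObjectProperty B from H) ⥤ HeartCat H S :=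
  CategoryTheory.Quotient.functor _

/-- The zero morphism in the ideal quotient `H/S`. -/
def heartZero (H S : Set B) (X Y : HeartCat H S) : X ⟶ Y :=
  (heartQ H S).map (0 : X.as ⟶ Y.as)

/-- `κ` is a kernel of `φ` in the ideal quotient `H/S`. -/
structure IsKernelArrow {H S : Set B} {K X Y : HeartCat H S}
    (κ : K ⟶ X) (φ : X ⟶ Y) : Prop where
  w : κ ≫ φ = heartZero H S K Y
  lift : ∀ ⦃T : HeartCat H S⦄ (t : T ⟶ X), t ≫ φ = heartZero H S T Y →
    ∃! u : T ⟶ K, u ≫ κ = t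

/-- `π` is a cokernel of `φ` in the ideal quotient `H/S`. -/
structure IsCokernelArrow {H S : Set B} {X Y Q : HeartCat H S}
    (φ : X ⟶ Y) (π : Y ⟶ Q) : Prop where
  w : φ ≫ π = heartZero H S X Q
  desc : ∀ ⦃T : HeartCat H S⦄ (t : Y ⟶ T), φ ≫ t = heartZero H S X T →
    ∃! u : Q ⟶ T, π ≫ u = t

/-- The class of epimorphisms in `H/S` whose kernel object lies in `A`. -/
def epiClassWithKernelIn (H S A : Set B) : MorphismProperty (HeartCat H S) :=
  fun X Y φ => Epi φ ∧ ∃ (K : HeartCat H S) (κ : K ⟶ X),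
    K.as.obj ∈ A ∧ IsKernelArrow κ φ

/-- The class of monomorphisms in `H/S` whose cokernel object lies in `A`. -/
def monoClassWithCokernelIn (H S A : Set B) : MorphismProperty (HeartCat H S) :=
  fun X Y φ => Mono φ ∧ ∃ (Q : HeartCat H S) (π : Y ⟶ Q),
    Q.as.obj ∈ A ∧ IsCokernelArrow φ π

/-- The diagram `(⋄)` associated with a morphism `f : Y ⟶ X`. -/
structure DiamondDiagram {Y X : B} (f : Y ⟶ X) {OmX PX Z₁ IY SgY Z₂ : B}
    (q : OmX ⟶ PX) (p : PX ⟶ X) (j : OmX ⟶ Z₁) (g : Z₁ ⟶ Y)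
    (i : Y ⟶ IY) (c : IY ⟶ SgY) (h : X ⟶ Z₂) (e : Z₂ ⟶ SgY)
    (u : Z₁ ⟶ PX) (v : IY ⟶ Z₂) : Prop where
  projPX : Projective PX
  injIY : Injective IY
  ses_proj : IsSES q p
  ses_pullback : IsSES j g
  ses_inj : IsSES i c
  ses_pushout : IsSES h e
  comm₁ : j ≫ u = q
  comm₂ : u ≫ p = g ≫ f
  comm₃ : f ≫ h = i ≫ v
  comm₄ : v ≫ e = c

/-- The class of morphisms `f : Y ⟶ X` admitting a diagram `(⋄)` with
`Z₁ ∈ ZCond` and `h` factoring through an object of `HCond`. -/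
def Rclass (ZCond HCond : Set B) : MorphismProperty B :=
  fun Y X f => ∃ (OmX PX Z₁ IY SgY Z₂ : B) (q : OmX ⟶ PX) (p : PX ⟶ X)
    (j : OmX ⟶ Z₁) (g : Z₁ ⟶ Y) (i : Y ⟶ IY) (c : IY ⟶ SgY)
    (h : X ⟶ Z₂) (e : Z₂ ⟶ SgY) (u : Z₁ ⟶ PX) (v : IY ⟶ Z₂),
    DiamondDiagram f q p j g i c h e u v ∧ Z₁ ∈ ZCond ∧ FactorsThru HCond h

/-- The class of morphisms `f : Y ⟶ X` admitting a diagram `(⋄)` with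
`g` factoring through an object of `GCond` and `h` through an object of `HCond`. -/
def RtildeClass (GCond HCond : Set B) : MorphismProperty B :=
  fun Y X f => ∃ (OmX PX Z₁ IY SgY Z₂ : B) (q : OmX ⟶ PX) (p : PX ⟶ X)
    (j : OmX ⟶ Z₁) (g : Z₁ ⟶ Y) (i : Y ⟶ IY) (c : IY ⟶ SgY)
    (h : X ⟶ Z₂) (e : Z₂ ⟶ SgY) (u : Z₁ ⟶ PX) (v : IY ⟶ Z₂),
    DiamondDiagram f q p j g i c h e u v ∧ FactorsThru GCond g ∧ FactorsThru HCond h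

/-- The objects of the heart `ℋ` of a cotorsion pair `(U, V)`. -/
def HeartObjects (U V : Set B) : Set B :=
  {X | (∃ (VX UX : B) (i : VX ⟶ UX) (p : UX ⟶ X),
          IsSES i p ∧ VX ∈ V ∧ UX ∈ U ∩ V) ∧
       (∃ (VX UX : B) (i : X ⟶ VX) (p : VX ⟶ UX),
          IsSES i p ∧ VX ∈ U ∩ V ∧ UX ∈ U)}

/-!
Let `0 → Y → E → D' → 0` be exact with `D' ∈ 𝒟`, take a projective presentation
`0 → K → P → D' → 0`, lift `P → D'` to `l : P → E` and let `φ : K → Y` be the restriction of `l`.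
Since `X ∈ 𝒟^⊥¹`, `f` extends over `E`, so `φ ≫ f` factors through `P ∈ 𝒞`; as `K ∈ CoCone(𝒞, 𝒞)`,
this says `φ̄ ≫ f̄ = 0` in the heart, and `f̄` mono gives `φ̄ = 0`, i.e. `φ` factors through some
`C₀ ∈ 𝒞`. Rigidity of `𝒞` extends `K → C₀` over `P`, so `φ` extends over `P`, and then the
sequence splits.
-/

namespace IsSES

variable {B : Type u} [Category.{v} B] [Abelian B] {X Y Z : B} {f : X ⟶ Y} {g : Y ⟶ Z}

lemma w (h : IsSES f g) : f ≫ g = 0 :=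
  h.elim fun w _ => w

lemma mono (h : IsSES f g) : Mono f :=
  h.elim fun _ hS => hS.mono_f

lemma epi (h : IsSES f g) : Epi g :=
  h.elim fun _ hS => hS.epi_g

lemma exists_lift (h : IsSES f g) {A : B} (k : A ⟶ Y) (hk : k ≫ g = 0) :
    ∃ l : A ⟶ X, l ≫ f = k := by
  have := h.mono
  obtain ⟨_, hS⟩ := h
  exact hS.exact.lift' k hk

lemma exists_desc (h : IsSES f g) {A : B} (k : Y ⟶ A) (hk : f ≫ k = 0) :
    ∃ l : Z ⟶ A, g ≫ l = k := by
  have := h.epi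
  obtain ⟨_, hS⟩ := h
  exact hS.exact.desc' k hk

lemma pushout_inl (h : IsSES f g) {W : B} (s : X ⟶ W) :
    IsSES (pushout.inl s f) (pushout.desc (0 : W ⟶ Z) g (by rw [comp_zero, h.w])) := by
  have := h.mono
  have := h.epi
  obtain ⟨w, hS⟩ := h
  set d : pushout s f ⟶ Z := pushout.desc 0 g (by rw [comp_zero, w])
  have hd : pushout.inl s f ≫ d = 0 := pushout.inl_desc _ _ _
  have := epi_of_epi_fac (show pushout.inr s f ≫ d = g from pushout.inr_desc _ _ _)
  have hcoker : IsColimit (CokernelCofork.ofπ d hd) := by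
    refine CokernelCofork.IsColimit.ofπ' d hd fun {A} k hk => ?_
    have hfk : f ≫ pushout.inr s f ≫ k = 0 := by
      rw [← pushout.condition_assoc, hk, comp_zero]
    refine ⟨hS.exact.desc (pushout.inr s f ≫ k) hfk, pushout.hom_ext ?_ ?_⟩
    · rw [pushout.inl_desc_assoc, zero_comp, hk]
    · rw [pushout.inr_desc_assoc]
      exact hS.exact.g_desc _ hfk
  exact ⟨hd, .mk' (ShortComplex.exact_of_g_is_cokernel _ hcoker) inferInstance inferInstance⟩

/-- The pushout of the sequence along `s` splits, and a retraction of its first map, precomposed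
with `pushout.inr`, extends `s`. -/
lemma exists_extension (h : IsSES f g) {W : B} (hZW : Ext1Zero Z W) (s : X ⟶ W) :
    ∃ e : Y ⟶ W, f ≫ e = s := by
  obtain ⟨σ, hσ⟩ := hZW _ _ (h.pushout_inl s)
  obtain ⟨_, hS⟩ := h.pushout_inl s
  let split := ShortComplex.Splitting.ofExactOfSection _ hS.exact σ hσ hS.mono_f
  refine ⟨pushout.inr s f ≫ split.r, ?_⟩
  have hr : pushout.inl s f ≫ split.r = 𝟙 W := split.f_r
  rw [← assoc, ← pushout.condition, assoc, hr, comp_id]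

/-- `(φ, l, 𝟙)` maps the sequence `q, π` to `f, g`; when `φ = q ≫ a`, the map `l - a ≫ f` kills `q`
and descends to a section of `g`. -/
lemma exists_section_of_extends (h : IsSES f g) {K P : B} {q : K ⟶ P} {π : P ⟶ Z}
    (hπ : IsSES q π) {l : P ⟶ Y} (hl : l ≫ g = π) {φ : K ⟶ X} (hφ : φ ≫ f = q ≫ l)
    {a : P ⟶ X} (ha : q ≫ a = φ) : ∃ σ : Z ⟶ Y, σ ≫ g = 𝟙 Z := by
  obtain ⟨σ, hσ⟩ := hπ.exists_desc (l - a ≫ f)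
    (by rw [Preadditive.comp_sub, reassoc_of% ha, hφ, sub_self])
  have := hπ.epi
  refine ⟨σ, (cancel_epi π).1 ?_⟩
  rw [reassoc_of% hσ, Preadditive.sub_comp, hl, assoc, h.w, comp_zero, sub_zero, comp_id]

end IsSES

lemma exists_isSES_projective {B : Type u} [Category.{v} B] [Abelian B] [EnoughProjectives B]
    (Z : B) :
    ∃ (K P : B) (q : K ⟶ P) (π : P ⟶ Z), Projective P ∧ IsSES q π :=
  ⟨_, _, kernel.ι (Projective.π Z), Projective.π Z, inferInstance, kernel.condition _,
    .mk' (ShortComplex.exact_kernel _) inferInstance inferInstance⟩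

namespace FactorsThru

variable {B : Type u} [Category.{v} B] {S : Set B} {X Y Z : B}

lemma zero [Abelian B] (hS : AddSubcat S) : FactorsThru S (0 : X ⟶ Y) :=
  ⟨0, 0, 0, hS.zero_mem, comp_zero⟩

lemma neg [Preadditive B] {f : X ⟶ Y} (hf : FactorsThru S f) : FactorsThru S (-f) := by
  obtain ⟨W, a, b, hW, rfl⟩ := hf
  exact ⟨W, -a, b, hW, Preadditive.neg_comp _ _⟩

lemma add [Abelian B] (hS : AddSubcat S) {f f' : X ⟶ Y} (hf : FactorsThru S f)
    (hf' : FactorsThru S f') : FactorsThru S (f + f') := by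
  obtain ⟨W, a, b, hW, rfl⟩ := hf
  obtain ⟨W', a', b', hW', rfl⟩ := hf'
  exact ⟨W ⊞ W', biprod.lift a a', biprod.desc b b', hS.sum_closed hW hW', biprod.lift_desc⟩

lemma comp_left {f : X ⟶ Y} (hf : FactorsThru S f) (e : Z ⟶ X) : FactorsThru S (e ≫ f) := by
  obtain ⟨W, a, b, hW, rfl⟩ := hf
  exact ⟨W, e ≫ a, b, hW, assoc _ _ _⟩

lemma comp_right {f : X ⟶ Y} (hf : FactorsThru S f) (e : Y ⟶ Z) : FactorsThru S (f ≫ e) := by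
  obtain ⟨W, a, b, hW, rfl⟩ := hf
  exact ⟨W, a, b ≫ e, hW, (assoc _ _ _).symm⟩

end FactorsThru

section Heart

variable {B : Type u} [Category.{v} B] [Abelian B] {H S : Set B}

lemma idealRel_congruence (hS : AddSubcat S) : Congruence (idealRel H S) where
  equivalence :=
    { refl := fun _ => by simpa [idealRel] using FactorsThru.zero hS
      symm := fun h => by simpa [idealRel] using h.neg
      trans := fun h h' => by simpa [idealRel] using h.add hS h' }
  comp_left := by
    intro _ _ _ e _ _ h
    simpa [idealRel, Preadditive.comp_sub] using h.comp_left e.hom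
  comp_right := fun e h => by
    simpa [idealRel, Preadditive.sub_comp] using h.comp_right e.hom

lemma heartQ_map_eq_heartZero_iff (hS : AddSubcat S) {X Y : B} (hX : X ∈ H) (hY : Y ∈ H)
    (f : X ⟶ Y) :
    (heartQ H S).map (X := ⟨X, hX⟩) (Y := ⟨Y, hY⟩) (ObjectProperty.homMk f) =
      heartZero H S _ _ ↔ FactorsThru S f := by
  have := idealRel_congruence (H := H) hS
  rw [heartZero, Quotient.functor_map_eq_iff]
  show FactorsThru S (f - 0) ↔ _
  rw [sub_zero]

lemma factorsThru_of_mono_heartQ_map (hS : AddSubcat S) {K Y X : B} (hK : K ∈ H) (hY : Y ∈ H)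
    (hX : X ∈ H) {f : Y ⟶ X}
    (hf : Mono ((heartQ H S).map (X := ⟨Y, hY⟩) (Y := ⟨X, hX⟩) (ObjectProperty.homMk f)))
    {φ : K ⟶ Y} (hφf : FactorsThru S (φ ≫ f)) : FactorsThru S φ := by
  rw [← heartQ_map_eq_heartZero_iff hS hK hY, ← cancel_mono ((heartQ H S).map
    (X := ⟨Y, hY⟩) (Y := ⟨X, hX⟩) (ObjectProperty.homMk f)), heartZero, ← Functor.map_comp,
    ← Functor.map_comp, zero_comp]
  exact (heartQ_map_eq_heartZero_iff hS hK hX _).2 hφf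

end Heart

theorem statement_9_general {B : Type u} [Category.{v} B] [Abelian B]
    [EnoughProjectives B]
    (C D : Set B) (hC : RCP C) (hDC : D ⊆ C)
    {Y X : B} (hY : Y ∈ CoCone C C) (hX : X ∈ CoCone C C) (f : Y ⟶ X)
    (hmono : Mono ((heartQ (CoCone C C) C).map (X := ⟨Y, hY⟩) (Y := ⟨X, hX⟩) (ObjectProperty.homMk f)))
    (hXD : X ∈ rightPerp D) :
    Y ∈ rightPerp D := by
  intro Z hZ E i p hE
  obtain ⟨g, hg⟩ := hE.exists_extension (hXD hZ) f
  obtain ⟨K, P, q, π, hP, hKP⟩ := exists_isSES_projective Z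
  have := hE.epi
  let l : P ⟶ E := Projective.factorThru π p
  have hl : l ≫ p = π := Projective.factorThru_comp π p
  obtain ⟨φ, hφ⟩ := hE.exists_lift (q ≫ l) (by rw [assoc, hl, hKP.w])
  have hφf : FactorsThru C (φ ≫ f) :=
    ⟨P, q, l ≫ g, hC.proj_mem hP, by rw [← assoc, ← hφ, assoc, hg]⟩
  have hK : K ∈ CoCone C C := ⟨P, Z, q, π, hC.proj_mem hP, hDC hZ, hKP⟩
  obtain ⟨C₀, s, t, hC₀, rfl⟩ := factorsThru_of_mono_heartQ_map hC.add hK hY hX hmono hφf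
  obtain ⟨a, ha⟩ := hKP.exists_extension (hC.rigid (hDC hZ) hC₀) s
  exact hE.exists_section_of_extends hKP hl hφ (a := a ≫ t) (by rw [reassoc_of% ha])

/-- `𝒜` is closed under subobjects in the heart. -/
theorem statement_9 {B : Type u} [Category.{v} B] [Abelian B]
    [EnoughProjectives B] [EnoughInjectives B]
    (C D : Set B) (hC : RCP C) (hD : RCP D) (hDC : D ⊆ C)
    {Y X : B} (hY : Y ∈ CoCone C C) (hX : X ∈ CoCone C C) (f : Y ⟶ X)
    (hmono : Mono ((heartQ (CoCone C C) C).map (X := ⟨Y, hY⟩) (Y := ⟨X, hX⟩) (ObjectProperty.homMk f)))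
    (hXD : X ∈ rightPerp D) :
    Y ∈ rightPerp D :=
  statement_9_general C D hC hDC hY hX f hmono hXD

end CotorsionPaper
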